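/- arXiv:2103.02256 — 5 statements merged into one kernel-verified Lean document; each statement's English description precedes it below -/
import Mathlib

section
/- Define sequences (u_k), (v_k) by u_0 = 1, v_{k+1} = (1/6)(2·8^k − 3·4^k + 2^k), and u_{k+1} = 5 u_k + v_{k+1}. Then for all k ≥ 0, u_k = (1/18)(2·8^k + 8·5^k + 9·4^k − 2^k). -/
theorem cum_a_formula (u v : ℕ → ℚ)
    (hu0 : u 0 = 1)
    (hv : ∀ k : ℕ, v (k + 1) = (2 * 8 ^ k - 3 * 4 ^ k + 2 ^ k) / 6)
    (hu : ∀ k : ℕ, u (k + 1) = 5 * u k + v (k + 1)) :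
    ∀ k : ℕ, u k = (2 * 8 ^ k + 8 * 5 ^ k + 9 * 4 ^ k - 2 ^ k) / 18 := by
  intro k
  induction k with
  | zero => norm_num [hu0]
  | succ k ih => rw [hu k, hv k, ih]; ring
end

section
/- Define sequences (y_k), (z_k) by y_0 = 1, z_{k+1} = (2·(2^k)^3 + 2^k)/3, and y_{k+1} = 5 y_k + z_{k+1}. Then for all k ≥ 0, y_k = (8·5^k)/9 + (2/9)·8^k − (1/9)·2^k. -/
theorem cum_b_formula (y z : ℕ → ℚ)
    (hy0 : y 0 = 1)
    (hz : ∀ k : ℕ, z (k + 1) = (2 * ((2 : ℚ) ^ k) ^ 3 + 2 ^ k) / 3)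
    (hy : ∀ k : ℕ, y (k + 1) = 5 * y k + z (k + 1)) :
    ∀ k : ℕ, y k = 8 * 5 ^ k / 9 + (2 / 9) * 8 ^ k - (1 / 9) * 2 ^ k := by
  have eight_pow (m : ℕ) : (8 : ℚ) ^ m = ((2 : ℚ) ^ m) ^ 3 := by
    rw [← pow_mul, mul_comm, pow_mul]
    norm_num
  intro k
  induction k with
  | zero => norm_num [hy0]
  | succ n ih =>
    rw [hy n, hz n, ih, eight_pow, eight_pow]
    ring
end

section
/- Let N : ℕ → ℕ satisfy N(0) = 0, N(1) = 1, and for every t with 2^k ≤ t < 2^{k+1} (k ≥ 0), N(t) = 4·N(t − 2^k) + (2^{k+1} − t)^2. Then for t = Σ_{i=0}^{k} t_i 2^i (binary digits t_i), N(t) = Σ_{i=0}^{k} t_{k−i} · 4^{Σ_{j=0}^{i} t_{k−j+1}} · (2^{k−i+1} − t + Σ_{j=0}^{i} t_{k−j+1} 2^{k−j+1})^2, where t_m = 0 for m > k. -/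
/-!
Unwinding the recurrence from the top bit: for `t = 2^k + s` with `s < 2^k`, the step
`N t = 4 N s + (2^(k+1) - t)^2` multiplies the contribution of every lower 1-bit by 4 and adds
`(2^(k+1) - t)^2` for the top bit. Hence each 1-bit of `t` at position `m` contributes
`4^(number of higher 1-bits) * (2^(m+1) - t % 2^(m+1))^2` (`closedForm`). The formula of the
theorem is the same sum indexed from the top (`i = k - m`), with `t % 2^(m+1)` written as `t`
minus its bits above position `m`.
-/

open Finset

theorem Finset.sum_range_sub_eq_sum_Ico {M : Type*} [AddCommMonoid M] (f : ℕ → M) {i n : ℕ}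
    (h : i ≤ n) : ∑ j ∈ range (i + 1), f (n - j) = ∑ p ∈ Ico (n - i) (n + 1), f p := by
  rw [range_eq_Ico, sum_Ico_reflect f 0 (by omega), Nat.add_sub_add_right, Nat.sub_zero]

namespace Nat

theorem mod_pow_div_pow_mod_of_lt (t b : ℕ) {m n : ℕ} (h : m < n) :
    t % b ^ n / b ^ m % b = t / b ^ m % b := by
  obtain ⟨d, rfl⟩ : ∃ d, n = m + (d + 1) := ⟨n - m - 1, by omega⟩
  rw [pow_add, Nat.mod_mul_right_div_self, pow_succ', Nat.mod_mul_right_mod]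

theorem sum_range_digit_mul_pow (t b n : ℕ) :
    ∑ p ∈ range n, t / b ^ p % b * b ^ p = t % b ^ n := by
  induction n with
  | zero => simp [Nat.mod_one]
  | succ n ih => rw [sum_range_succ, ih, Nat.mod_pow_succ, mul_comm]

theorem sum_Ico_digit_mul_pow (t b : ℕ) {m n : ℕ} (h : m ≤ n) :
    ∑ p ∈ Ico m n, ((t / b ^ p % b : ℕ) : ℤ) * (b : ℤ) ^ p =
      ((t % b ^ n : ℕ) : ℤ) - ((t % b ^ m : ℕ) : ℤ) := by
  rw [sum_Ico_eq_sub _ h]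
  simp only [← sum_range_digit_mul_pow t b, Nat.cast_sum, Nat.cast_mul, Nat.cast_pow]

end Nat

def closedForm (K t : ℕ) : ℤ :=
  ∑ m ∈ range K, ((t / 2 ^ m % 2 : ℕ) : ℤ) * 4 ^ (∑ j ∈ Ico (m + 1) K, t / 2 ^ j % 2) *
    ((2 : ℤ) ^ (m + 1) - (t % 2 ^ (m + 1) : ℕ)) ^ 2

theorem closedForm_succ (K t : ℕ) :
    closedForm (K + 1) t = 4 ^ (t / 2 ^ K % 2) * closedForm K (t % 2 ^ K) +
      ((t / 2 ^ K % 2 : ℕ) : ℤ) * ((2 : ℤ) ^ (K + 1) - (t % 2 ^ (K + 1) : ℕ)) ^ 2 := by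
  unfold closedForm
  rw [sum_range_succ, mul_sum, Ico_self, sum_empty, pow_zero, mul_one]
  congr 1
  refine sum_congr rfl fun m hm => ?_
  have hmK : m < K := mem_range.mp hm
  have hdigits : ∑ j ∈ Ico (m + 1) K, t % 2 ^ K / 2 ^ j % 2 = ∑ j ∈ Ico (m + 1) K, t / 2 ^ j % 2 :=
    sum_congr rfl fun j hj => Nat.mod_pow_div_pow_mod_of_lt t 2 (mem_Ico.mp hj).2
  rw [sum_Ico_succ_top hmK, pow_add, hdigits, Nat.mod_pow_div_pow_mod_of_lt t 2 hmK,
    Nat.mod_mod_of_dvd _ (pow_dvd_pow 2 hmK)]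
  ring

theorem eq_closedForm_of_recurrence (N : ℕ → ℕ) (h0 : N 0 = 0)
    (hrec : ∀ k t : ℕ, 2 ^ k ≤ t → t < 2 ^ (k + 1) →
      (N t : ℤ) = 4 * N (t - 2 ^ k) + ((2 : ℤ) ^ (k + 1) - t) ^ 2) :
    ∀ K t : ℕ, t < 2 ^ K → (N t : ℤ) = closedForm K t := by
  intro K
  induction K with
  | zero =>
    intro t ht
    simp [closedForm, Nat.lt_one_iff.mp ht, h0]
  | succ K ih =>
    intro t ht
    rw [closedForm_succ, Nat.mod_eq_of_lt ht]
    rcases lt_or_ge t (2 ^ K) with hlow | hhigh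
    · rw [Nat.div_eq_of_lt hlow, Nat.mod_eq_of_lt hlow, ← ih t hlow]
      simp
    · have hlt : t < 2 * 2 ^ K := by rwa [← pow_succ']
      have htop : t / 2 ^ K = 1 := Nat.div_eq_of_lt_le (by simpa using hhigh) (by simpa using hlt)
      have hrest : t % 2 ^ K = t - 2 ^ K := by
        rw [Nat.mod_eq_sub_mod hhigh, Nat.mod_eq_of_lt (by omega)]
      rw [htop, hrest, ← ih _ (by omega), hrec K t hhigh ht]
      simp

theorem closedForm_eq_sum_reflected (k t : ℕ) (ht : t < 2 ^ (k + 1)) :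
    closedForm (k + 1) t =
      ∑ i ∈ Finset.range (k + 1),
          ((t / 2 ^ (k - i) % 2 : ℕ) : ℤ) *
            4 ^ (∑ j ∈ Finset.range (i + 1), t / 2 ^ (k + 1 - j) % 2) *
            ((2 : ℤ) ^ (k + 1 - i) - t +
              ∑ j ∈ Finset.range (i + 1),
                ((t / 2 ^ (k + 1 - j) % 2 : ℕ) : ℤ) * 2 ^ (k + 1 - j)) ^ 2 := by
  rw [← sum_range_reflect]
  refine sum_congr rfl fun m hm => ?_
  have hmk : m ≤ k := Nat.lt_succ_iff.mp (mem_range.mp hm)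
  have hi : k + 1 - 1 - m = k - m := by omega
  have hlow : k + 1 - (k - m) = m + 1 := by omega
  have htop : t / 2 ^ (k + 1) % 2 = 0 := by rw [Nat.div_eq_of_lt ht, Nat.zero_mod]
  have hcount : ∑ j ∈ range (k - m + 1), t / 2 ^ (k + 1 - j) % 2 =
      ∑ j ∈ Ico (m + 1) (k + 1), t / 2 ^ j % 2 := by
    rw [sum_range_sub_eq_sum_Ico (fun p => t / 2 ^ p % 2) (by omega), hlow,
      sum_Ico_succ_top (by omega), htop, add_zero]
  have hhigh : ∑ j ∈ range (k - m + 1), ((t / 2 ^ (k + 1 - j) % 2 : ℕ) : ℤ) * 2 ^ (k + 1 - j) =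
      t - (t % 2 ^ (m + 1) : ℕ) := by
    rw [sum_range_sub_eq_sum_Ico (fun p => ((t / 2 ^ p % 2 : ℕ) : ℤ) * 2 ^ p) (by omega), hlow]
    have := Nat.sum_Ico_digit_mul_pow t 2 (show m + 1 ≤ k + 1 + 1 by omega)
    simp only [Nat.cast_ofNat] at this
    rw [this, Nat.mod_eq_of_lt (ht.trans (Nat.pow_lt_pow_succ (by norm_num)))]
  rw [hi, hcount, hhigh, hlow, Nat.sub_sub_self hmk]
  ring

theorem num_a_closed_form_general (N : ℕ → ℕ)
    (h0 : N 0 = 0)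
    (hrec : ∀ k t : ℕ, 2 ^ k ≤ t → t < 2 ^ (k + 1) →
      (N t : ℤ) = 4 * N (t - 2 ^ k) + ((2 : ℤ) ^ (k + 1) - t) ^ 2) :
    ∀ k t : ℕ, t < 2 ^ (k + 1) →
      (N t : ℤ) =
        ∑ i ∈ Finset.range (k + 1),
          ((t / 2 ^ (k - i) % 2 : ℕ) : ℤ) *
            4 ^ (∑ j ∈ Finset.range (i + 1), t / 2 ^ (k + 1 - j) % 2) *
            ((2 : ℤ) ^ (k + 1 - i) - t +
              ∑ j ∈ Finset.range (i + 1),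
                ((t / 2 ^ (k + 1 - j) % 2 : ℕ) : ℤ) * 2 ^ (k + 1 - j)) ^ 2 := by
  intro k t ht
  rw [eq_closedForm_of_recurrence N h0 hrec (k + 1) t ht, closedForm_eq_sum_reflected k t ht]

theorem num_a_closed_form (N : ℕ → ℕ)
    (h0 : N 0 = 0) (h1 : N 1 = 1)
    (hrec : ∀ k t : ℕ, 2 ^ k ≤ t → t < 2 ^ (k + 1) →
      (N t : ℤ) = 4 * N (t - 2 ^ k) + ((2 : ℤ) ^ (k + 1) - t) ^ 2) :
    ∀ k t : ℕ, t < 2 ^ (k + 1) →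
      (N t : ℤ) =
        ∑ i ∈ Finset.range (k + 1),
          ((t / 2 ^ (k - i) % 2 : ℕ) : ℤ) *
            4 ^ (∑ j ∈ Finset.range (i + 1), t / 2 ^ (k + 1 - j) % 2) *
            ((2 : ℤ) ^ (k + 1 - i) - t +
              ∑ j ∈ Finset.range (i + 1),
                ((t / 2 ^ (k + 1 - j) % 2 : ℕ) : ℤ) * 2 ^ (k + 1 - j)) ^ 2 :=
  num_a_closed_form_general N h0 hrec
end

section
/- For every nonnegative integer t with binary expansion t = Σ_{i=0}^{l−1} t_i 2^i, the number num_{S0}(t+1) of nonzero states equals 4 raised to the power Σ_{j=0}^{l−1} t_j (4 to the binary digit sum of t). -/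
/-!
Shifting the argument, `g t := num (t + 1)` satisfies `g 0 = 1`, `g (2n) = g n` and
`g (2n + 1) = 4 * g n`: appending a binary digit `d` to `t` multiplies `g` by `4 ^ d`.
Peeling off the last digit and inducting on the number of digits gives `4 ^ (digit sum)`.
-/

open Finset

theorem sum_range_succ_div_pow_mod (b t l : ℕ) :
    ∑ j ∈ range (l + 1), t / b ^ j % b = t % b + ∑ j ∈ range l, t / b / b ^ j % b := by
  rw [sum_range_succ', add_comm]
  simp only [pow_zero, Nat.div_one, pow_succ', Nat.div_div_eq_div_mul]

theorem eq_pow_sum_digits_of_map_mul_add {M : Type*} [Monoid M] (g : ℕ → M) (a : M) (b : ℕ)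
    (hg0 : g 0 = 1) (hg : ∀ n d, d < b → g (b * n + d) = a ^ d * g n) :
    ∀ l t, t < b ^ l → g t = a ^ ∑ j ∈ range l, t / b ^ j % b
  | 0, t, ht => by simp_all
  | l + 1, t, ht => by
    have hb : 0 < b := Nat.pos_of_ne_zero fun h => by simp [h] at ht
    have hquot : t / b < b ^ l := Nat.div_lt_of_lt_mul (by rwa [← pow_succ'])
    calc g t = g (b * (t / b) + t % b) := by rw [Nat.div_add_mod]
      _ = a ^ (t % b) * a ^ ∑ j ∈ range l, t / b / b ^ j % b := by
        rw [hg _ _ (Nat.mod_lt t hb), eq_pow_sum_digits_of_map_mul_add g a b hg0 hg l _ hquot]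
      _ = a ^ ∑ j ∈ range (l + 1), t / b ^ j % b := by
        rw [sum_range_succ_div_pow_mod, pow_add]

theorem num_S0_digit_sum_general (num : ℕ → ℕ)
    (h1 : num 1 = 1)
    (hodd : ∀ t : ℕ, num (2 * t + 1) = num (t + 1))
    (heven : ∀ t : ℕ, num (2 * t + 2) = 4 * num (t + 1)) :
    ∀ t l : ℕ, t < 2 ^ l →
      num (t + 1) = 4 ^ (∑ j ∈ Finset.range l, t / 2 ^ j % 2) := by
  have happend : ∀ n d, d < 2 → num (2 * n + d + 1) = 4 ^ d * num (n + 1) := by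
    intro n d hd
    interval_cases d
    · simpa using hodd n
    · simpa using heven n
  intro t l ht
  exact eq_pow_sum_digits_of_map_mul_add (fun t => num (t + 1)) 4 2 h1 happend l t ht

theorem num_S0_digit_sum (num : ℕ → ℕ)
    (h0 : num 0 = 0) (h1 : num 1 = 1)
    (hodd : ∀ t : ℕ, num (2 * t + 1) = num (t + 1))
    (heven : ∀ t : ℕ, num (2 * t + 2) = 4 * num (t + 1)) :
    ∀ t l : ℕ, t < 2 ^ l →
      num (t + 1) = 4 ^ (∑ j ∈ Finset.range l, t / 2 ^ j % 2) :=
  num_S0_digit_sum_general num h1 hodd heven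
end

section
/- With F defined by F(x) = Σ_{i=0}^{∞} x_i · 4^{Σ_{j=0}^{i−1} x_j} · (Σ_{j=i}^{∞} (1 − x_j)/2^j)^2 using the finite binary expansion of x for dyadic rationals, one has F(x) < 4/9 for all x ∈ (0,1). -/
/-- The `i`-th binary digit of `x ∈ [0,1]` (with `digit x 0` the units digit),
using the finite (terminating) expansion at dyadic rationals. -/
noncomputable def digit (x : ℝ) (i : ℕ) : ℕ := (⌊2 ^ i * x⌋).toNat % 2

/-- The tail sum `Σ_{j=i}^{∞} (1 - x_j)/2^j`. -/
noncomputable def tail (x : ℝ) (i : ℕ) : ℝ :=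
  ∑' j : ℕ, (1 - (digit x (i + j) : ℝ)) / 2 ^ (i + j)

/-- The function `F` from the cellular automaton `T_a`. -/
noncomputable def F (x : ℝ) : ℝ :=
  ∑' i : ℕ, (digit x i : ℝ) * 4 ^ (∑ j ∈ Finset.range i, digit x j) * (tail x i) ^ 2

/-!
Write `t x = Σ_{j ≥ 1} (1 - x_j)/2^j` and `y = fract (2x)`, whose digits are those of `x` shifted
by one. Then `t x = (1 - x_1)/2 + t y / 2`, and the partial sums `P_n` of `F` satisfy
`P_{n+2} x = x_1 (t x)^2 + 4^{x_1}/4 · P_{n+1} y`. By induction on `n` this gives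
`P_n x ≤ (1 - (t x)^2)/3` for all `x ∈ [0,1)`: when `x_1 = 1` the step is an identity, and when
`x_1 = 0` it reduces to `t y ≤ 1`. Hence `F x ≤ 1/3 < 4/9`.
-/

open Finset

section Digits

lemma digit_le_one (x : ℝ) (i : ℕ) : digit x i ≤ 1 := by
  unfold digit; omega

lemma digit_eq_zero_or_eq_one (x : ℝ) (i : ℕ) : digit x i = 0 ∨ digit x i = 1 := by
  have := digit_le_one x i; omega

lemma digit_zero_of_mem_Ico {x : ℝ} (hx : x ∈ Set.Ico (0 : ℝ) 1) : digit x 0 = 0 := by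
  rw [digit, pow_zero, one_mul, Int.floor_eq_zero_iff.2 hx]
  rfl

lemma digit_fract_two_mul {x : ℝ} (hx : 0 ≤ x) {i : ℕ} (hi : i ≠ 0) :
    digit (Int.fract (2 * x)) i = digit x (i + 1) := by
  rcases i with _ | k
  · exact absurd rfl hi
  have hsplit : (2 : ℝ) ^ (k + 1 + 1) * x
      = 2 ^ (k + 1) * Int.fract (2 * x) + ((2 * (2 ^ k * ⌊2 * x⌋) : ℤ) : ℝ) := by
    rw [Int.fract]; push_cast; ring
  have hfract : 0 ≤ ⌊2 ^ (k + 1) * Int.fract (2 * x)⌋ :=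
    Int.floor_nonneg.2 (mul_nonneg (by positivity) (Int.fract_nonneg _))
  have heven : (0 : ℤ) ≤ 2 ^ k * ⌊2 * x⌋ :=
    mul_nonneg (by positivity) (Int.floor_nonneg.2 (by linarith))
  rw [digit, digit, hsplit, Int.floor_add_intCast]
  omega

end Digits

section Tail

lemma tail_term_nonneg (x : ℝ) (k : ℕ) : 0 ≤ (1 - (digit x k : ℝ)) / 2 ^ k := by
  have : (digit x k : ℝ) ≤ 1 := by exact_mod_cast digit_le_one x k
  exact div_nonneg (by linarith) (by positivity)

lemma tail_term_le (x : ℝ) (k : ℕ) : (1 - (digit x k : ℝ)) / 2 ^ k ≤ (1 / 2) ^ k := by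
  rw [div_pow, one_pow]
  gcongr
  have : (0 : ℝ) ≤ digit x k := by positivity
  linarith

lemma summable_tail_term (x : ℝ) (i : ℕ) :
    Summable fun j : ℕ => (1 - (digit x (i + j) : ℝ)) / 2 ^ (i + j) :=
  .of_nonneg_of_le (fun _ => tail_term_nonneg x _)
    (fun j => pow_add (1 / 2 : ℝ) i j ▸ tail_term_le x _) (summable_geometric_two.mul_left _)

lemma tail_nonneg (x : ℝ) (i : ℕ) : 0 ≤ tail x i :=
  tsum_nonneg fun _ => tail_term_nonneg x _

lemma tail_le (x : ℝ) (i : ℕ) : tail x i ≤ 2 * (1 / 2) ^ i := by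
  calc tail x i ≤ ∑' j : ℕ, (1 / 2 : ℝ) ^ i * (1 / 2) ^ j :=
        (summable_tail_term x i).tsum_le_tsum (fun j => pow_add (1 / 2 : ℝ) i j ▸ tail_term_le x _)
          (summable_geometric_two.mul_left _)
    _ = 2 * (1 / 2) ^ i := by rw [tsum_mul_left, tsum_geometric_two, mul_comm]

lemma tail_one_le_one (x : ℝ) : tail x 1 ≤ 1 := by
  simpa using tail_le x 1

lemma tail_eq_add_tail_succ (x : ℝ) (i : ℕ) :
    tail x i = (1 - (digit x i : ℝ)) / 2 ^ i + tail x (i + 1) := by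
  rw [tail, (summable_tail_term x i).tsum_eq_zero_add, tail, Nat.add_zero]
  simp only [← add_assoc, Nat.add_right_comm i _ 1]

lemma tail_succ_eq_tail_fract_two_mul {x : ℝ} (hx : 0 ≤ x) {i : ℕ} (hi : i ≠ 0) :
    tail x (i + 1) = tail (Int.fract (2 * x)) i / 2 := by
  rw [tail, tail, ← tsum_div_const]
  refine tsum_congr fun j => ?_
  rw [digit_fract_two_mul hx (by omega), Nat.add_right_comm, pow_succ]
  ring

lemma tail_one_eq {x : ℝ} (hx : 0 ≤ x) :
    tail x 1 = (1 - (digit x 1 : ℝ)) / 2 + tail (Int.fract (2 * x)) 1 / 2 := by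
  rw [tail_eq_add_tail_succ x 1, tail_succ_eq_tail_fract_two_mul hx one_ne_zero, pow_one]

end Tail

namespace F

noncomputable def term (x : ℝ) (i : ℕ) : ℝ :=
  (digit x i : ℝ) * 4 ^ (∑ j ∈ range i, digit x j) * tail x i ^ 2

lemma term_nonneg (x : ℝ) (i : ℕ) : 0 ≤ term x i := by
  have := tail_nonneg x i
  unfold term; positivity

lemma term_zero {x : ℝ} (hx : x ∈ Set.Ico (0 : ℝ) 1) : term x 0 = 0 := by
  simp [term, digit_zero_of_mem_Ico hx]

lemma term_one {x : ℝ} (hx : x ∈ Set.Ico (0 : ℝ) 1) : term x 1 = digit x 1 * tail x 1 ^ 2 := by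
  simp [term, digit_zero_of_mem_Ico hx]

lemma sum_range_digit_succ {x : ℝ} (hx : x ∈ Set.Ico (0 : ℝ) 1) {i : ℕ} (hi : i ≠ 0) :
    ∑ j ∈ range (i + 1), digit x j
      = digit x 1 + ∑ j ∈ range i, digit (Int.fract (2 * x)) j := by
  obtain ⟨k, rfl⟩ := Nat.exists_eq_succ_of_ne_zero hi
  rw [sum_range_succ', sum_range_succ', sum_range_succ', digit_zero_of_mem_Ico hx,
    digit_zero_of_mem_Ico ⟨Int.fract_nonneg _, Int.fract_lt_one _⟩]
  simp only [digit_fract_two_mul hx.1 (Nat.succ_ne_zero _)]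
  ring

lemma term_succ_eq {x : ℝ} (hx : x ∈ Set.Ico (0 : ℝ) 1) {i : ℕ} (hi : i ≠ 0) :
    term x (i + 1) = 4 ^ digit x 1 / 4 * term (Int.fract (2 * x)) i := by
  rw [term, term, ← digit_fract_two_mul hx.1 hi, sum_range_digit_succ hx hi,
    tail_succ_eq_tail_fract_two_mul hx.1 hi, pow_add]
  ring

lemma sum_range_term_add_two {x : ℝ} (hx : x ∈ Set.Ico (0 : ℝ) 1) (n : ℕ) :
    ∑ i ∈ range (n + 2), term x i
      = digit x 1 * tail x 1 ^ 2
        + 4 ^ digit x 1 / 4 * ∑ i ∈ range (n + 1), term (Int.fract (2 * x)) i := by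
  rw [sum_range_succ', sum_range_succ', mul_sum, sum_range_succ',
    term_zero hx, term_zero ⟨Int.fract_nonneg _, Int.fract_lt_one _⟩, term_one hx]
  simp only [term_succ_eq hx (Nat.succ_ne_zero _)]
  ring

lemma sum_range_term_succ_le (n : ℕ) :
    ∀ x ∈ Set.Ico (0 : ℝ) 1, ∑ i ∈ range (n + 1), term x i ≤ (1 - tail x 1 ^ 2) / 3 := by
  induction n with
  | zero =>
    intro x hx
    have := tail_one_le_one x
    have := tail_nonneg x 1
    rw [sum_range_one, term_zero hx]
    nlinarith
  | succ n ih =>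
    intro x hx
    set y := Int.fract (2 * x)
    have hy := ih y ⟨Int.fract_nonneg _, Int.fract_lt_one _⟩
    have := tail_one_le_one y
    rw [sum_range_term_add_two hx, tail_one_eq hx.1]
    rcases digit_eq_zero_or_eq_one x 1 with h | h <;> rw [h] <;> push_cast <;> nlinarith

lemma le_of_mem_Ico {x : ℝ} (hx : x ∈ Set.Ico (0 : ℝ) 1) : F x ≤ (1 - tail x 1 ^ 2) / 3 := by
  refine Real.tsum_le_of_sum_range_le (term_nonneg x) fun n => ?_
  rcases n with _ | n
  · have := tail_one_le_one x
    have := tail_nonneg x 1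
    rw [sum_range_zero]; nlinarith
  · exact sum_range_term_succ_le n x hx

end F

theorem F_lt_four_ninths : ∀ x ∈ Set.Ioo (0 : ℝ) 1, F x < 4 / 9 := by
  intro x hx
  have := F.le_of_mem_Ico (Set.Ioo_subset_Ico_self hx)
  nlinarith [sq_nonneg (tail x 1)]
end
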